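/- Greedy (1+a)-approximation for a-submodular valuations: if all valuations v₁,…,vₙ are a-submodular for some a ≥ 1 (i.e., a·vⱼ(x|S) ≥ vⱼ(x|T) for all S ⊆ T, x ∉ T), then the greedy algorithm assigning each item, in order, to the bidder with the largest current marginal value yields an allocation whose total value is at least 1/(1+a) times the optimum Σⱼ vⱼ(Tⱼ) over all partitions (T₁,…,Tₙ). -/

import Mathlib

/-!
Write `gain x` for the marginal value item `x` brought to the bidder who received it. Summing
these gains bidder by bidder telescopes, so they add up to the greedy welfare. For any other
bundle `T j`, a-submodularity bounds the value of each item of `T j \ S j` on top of `S j` by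
`a` times its marginal value to `j` at the moment it was processed, which the greedy choice
bounds by its `gain`. Since the `T j` are disjoint, these gains add up to at most the greedy
welfare.
-/

open Finset

section

variable {α : Type*} [DecidableEq α]

def marginal {β : Type*} [Sub β] (f : Finset α → β) (x : α) (A : Finset α) : β :=
  f (insert x A) - f A

def IsASubmodular (a : ℝ) (f : Finset α → ℝ) : Prop :=
  ∀ S T x, S ⊆ T → x ∉ T → marginal f x T ≤ a * marginal f x S

lemma marginal_nonneg {f : Finset α → ℝ} (hf : Monotone f) (x : α) (A : Finset α) :
    0 ≤ marginal f x A :=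
  sub_nonneg.2 (hf (subset_insert x A))

theorem sum_marginal_filter_lt [LinearOrder α] {β : Type*} [AddCommGroup β]
    (f : Finset α → β) (A : Finset α) :
    ∑ x ∈ A, marginal f x (A.filter (· < x)) = f A - f ∅ := by
  induction A using Finset.induction_on_max with
  | empty => simp
  | insert x A hlt ih =>
    have hx : x ∉ A := fun hx => lt_irrefl x (hlt x hx)
    have hprefix : ∀ y ∈ A, (insert x A).filter (· < y) = A.filter (· < y) := fun y hy => by
      rw [filter_insert, if_neg (not_lt.2 (hlt y hy).le)]
    rw [sum_insert hx, filter_insert, if_neg (lt_irrefl x), filter_true_of_mem hlt,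
      sum_congr rfl fun y hy => by rw [hprefix y hy], ih, marginal]
    abel

theorem sum_marginal_fiberwise [Fintype α] [LinearOrder α] {ι β : Type*} [Fintype ι]
    [DecidableEq ι] [AddCommGroup β] (v : ι → Finset α → β) (h0 : ∀ j, v j ∅ = 0) (g : α → ι) :
    ∑ x, marginal (v (g x)) x ((univ.filter (g · = g x)).filter (· < x)) =
      ∑ j, v j (univ.filter (g · = j)) := by
  rw [← sum_fiberwise univ g]
  refine sum_congr rfl fun j _ => ?_
  rw [← sub_zero (v j _), ← h0 j, ← sum_marginal_filter_lt]
  exact sum_congr rfl fun x hx => by rw [(mem_filter.1 hx).2]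

theorem IsASubmodular.le_add_mul_sum {a : ℝ} {f : Finset α → ℝ} (hf : IsASubmodular a f)
    {B C : Finset α} (P : α → Finset α) (hBC : Disjoint B C) (hP : ∀ x ∈ B, P x ⊆ C) :
    f (B ∪ C) ≤ f C + a * ∑ x ∈ B, marginal f x (P x) := by
  induction B using Finset.induction_on with
  | empty => simp
  | insert x B hx ih =>
    rw [disjoint_insert_left] at hBC
    have hstep : f (insert x (B ∪ C)) - f (B ∪ C) ≤ a * marginal f x (P x) :=
      hf _ _ x ((hP x (mem_insert_self x B)).trans subset_union_right) (by simp [hx, hBC.1])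
    have hB := ih hBC.2 fun y hy => hP y (mem_insert_of_mem hy)
    rw [insert_union, sum_insert hx, mul_add]
    linarith

theorem IsASubmodular.le_add_mul_sum_sdiff {a : ℝ} {f : Finset α → ℝ} (hf : IsASubmodular a f)
    (hmono : Monotone f) (B C : Finset α) (P : α → Finset α) (hP : ∀ x, P x ⊆ C) :
    f B ≤ f C + a * ∑ x ∈ B \ C, marginal f x (P x) :=
  calc f B ≤ f (B \ C ∪ C) := hmono (by rw [sdiff_union_self_eq_union]; exact subset_union_left)
    _ ≤ _ := hf.le_add_mul_sum P sdiff_disjoint fun x _ => hP x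

end

theorem greedy_one_plus_a_approx_aSubmodular_general
    {m n : ℕ} (a : ℝ) (ha : 1 ≤ a)
    (v : Fin n → Finset (Fin m) → ℝ)
    (h0 : ∀ j, v j ∅ = 0)
    (hmono : ∀ j, ∀ A B : Finset (Fin m), A ⊆ B → v j A ≤ v j B)
    (hasub : ∀ j, ∀ (S T : Finset (Fin m)) (x : Fin m), S ⊆ T → x ∉ T →
      v j (insert x T) - v j T ≤ a * (v j (insert x S) - v j S))
    (g : Fin m → Fin n)
    (prev : Fin n → Fin m → Finset (Fin m))
    (hprev : ∀ j x, prev j x = Finset.univ.filter (fun y => y < x ∧ g y = j))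
    (hgreedy : ∀ (x : Fin m) (j : Fin n),
      v j (insert x (prev j x)) - v j (prev j x) ≤
        v (g x) (insert x (prev (g x) x)) - v (g x) (prev (g x) x))
    (S : Fin n → Finset (Fin m))
    (hS : ∀ j, S j = Finset.univ.filter (fun y => g y = j)) :
    ∀ T : Fin n → Finset (Fin m),
      (∀ i j, i ≠ j → Disjoint (T i) (T j)) →
      Finset.univ.biUnion T = Finset.univ →
      ∑ j, v j (T j) ≤ (1 + a) * ∑ j, v j (S j) := by
  intro T hdisj _
  have ha0 : 0 ≤ a := zero_le_one.trans ha
  have hprevS : ∀ j x, prev j x = (S j).filter (· < x) := fun j x => by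
    rw [hprev, hS, filter_filter]
    exact filter_congr fun y _ => and_comm
  set gain : Fin m → ℝ := fun x => marginal (v (g x)) x ((S (g x)).filter (· < x))
  have htotal : ∑ x, gain x = ∑ j, v j (S j) := by
    simp only [gain, hS]
    exact sum_marginal_fiberwise v h0 g
  have hbidder : ∀ j, v j (T j) ≤ v j (S j) + a * ∑ x ∈ T j \ S j, gain x := by
    intro j
    refine (IsASubmodular.le_add_mul_sum_sdiff (hasub j) (fun A B => hmono j A B) (T j) (S j)
      (fun x => (S j).filter (· < x)) fun x => filter_subset _ _).trans ?_
    gcongr with x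
    simpa only [hprevS, marginal, gain] using hgreedy x j
  have hcover : ∑ j, ∑ x ∈ T j \ S j, gain x ≤ ∑ x, gain x := by
    rw [← sum_biUnion fun i _ j _ hij => (hdisj i j hij).mono sdiff_subset sdiff_subset]
    exact sum_le_univ_sum_of_nonneg fun x => marginal_nonneg (fun A B => hmono (g x) A B) _ _
  calc ∑ j, v j (T j) ≤ ∑ j, (v j (S j) + a * ∑ x ∈ T j \ S j, gain x) :=
        sum_le_sum fun j _ => hbidder j
    _ = ∑ j, v j (S j) + a * ∑ j, ∑ x ∈ T j \ S j, gain x := by rw [sum_add_distrib, mul_sum]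
    _ ≤ ∑ j, v j (S j) + a * ∑ x, gain x := by gcongr
    _ = (1 + a) * ∑ j, v j (S j) := by rw [htotal]; ring

/-- if all valuations are `a`-submodular for some `a ≥ 1`, then
the greedy algorithm (processing the items of `X = Fin m` in increasing order
and giving each item to a bidder with the largest current marginal value)
produces an allocation whose total value is at least `1/(1+a)` times the
optimum. `prev j x` is the set of items assigned to bidder `j` before item `x`
is processed and `S j` is bidder `j`'s final bundle. -/
theorem greedy_one_plus_a_approx_aSubmodular
    {m n : ℕ} (a : ℝ) (ha : 1 ≤ a)
    (v : Fin n → Finset (Fin m) → ℝ)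
    (h0 : ∀ j, v j ∅ = 0)
    (hmono : ∀ j, ∀ A B : Finset (Fin m), A ⊆ B → v j A ≤ v j B)
    (hnn : ∀ j, ∀ A : Finset (Fin m), 0 ≤ v j A)
    (hasub : ∀ j, ∀ (S T : Finset (Fin m)) (x : Fin m), S ⊆ T → x ∉ T →
      v j (insert x T) - v j T ≤ a * (v j (insert x S) - v j S))
    (g : Fin m → Fin n)
    (prev : Fin n → Fin m → Finset (Fin m))
    (hprev : ∀ j x, prev j x = Finset.univ.filter (fun y => y < x ∧ g y = j))
    (hgreedy : ∀ (x : Fin m) (j : Fin n),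
      v j (insert x (prev j x)) - v j (prev j x) ≤
        v (g x) (insert x (prev (g x) x)) - v (g x) (prev (g x) x))
    (S : Fin n → Finset (Fin m))
    (hS : ∀ j, S j = Finset.univ.filter (fun y => g y = j)) :
    ∀ T : Fin n → Finset (Fin m),
      (∀ i j, i ≠ j → Disjoint (T i) (T j)) →
      Finset.univ.biUnion T = Finset.univ →
      ∑ j, v j (T j) ≤ (1 + a) * ∑ j, v j (S j) :=
  greedy_one_plus_a_approx_aSubmodular_general a ha v h0 hmono hasub g prev hprev hgreedy S hS
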